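/- arXiv:1609.04561 — 2 statements merged into one kernel-verified Lean document; each statement's English description precedes it below -/
import Mathlib

section
/- For all real numbers a, b ≥ 0 and γ > 0, there exists a constant c > 0 (depending only on γ) such that (a - b)(a^γ - b^γ) ≥ c |a^{(1+γ)/2} - b^{(1+γ)/2}|². -/
open Real

lemma key (γ : ℝ) (hγ : 0 < γ) (t : ℝ) (ht0 : 0 ≤ t) (ht1 : t ≤ 1) :
    min 1 γ / (max 1 ((1 + γ) / 2)) ^ 2 * (1 - t ^ ((1 + γ) / 2)) ^ 2
      ≤ (1 - t) * (1 - t ^ γ) := by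
  set s : ℝ := (1 + γ) / 2 with hs
  have hspos : 0 < s := by positivity
  have hts1 : t ^ s ≤ 1 := Real.rpow_le_one ht0 ht1 hspos.le
  have htg1 : t ^ γ ≤ 1 := Real.rpow_le_one ht0 ht1 hγ.le
  have h1 : 1 - t ^ s ≤ max 1 s * (1 - t) := by
    rcases le_total 1 s with hs1 | hs1
    · have hb : 1 + s * (t - 1) ≤ (1 + (t - 1)) ^ s :=
        one_add_mul_self_le_rpow_one_add (by linarith) hs1
      have : (1 + (t - 1)) = t := by ring
      rw [this] at hb
      have : max 1 s = s := max_eq_right hs1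
      rw [this]; nlinarith
    · have hb : t = t ^ (1 : ℝ) := (Real.rpow_one t).symm
      rcases eq_or_lt_of_le ht0 with h0 | h0
      · rw [← h0, Real.zero_rpow hspos.ne']
        have : (1:ℝ) ≤ max 1 s := le_max_left _ _
        nlinarith
      · have : t ^ (1:ℝ) ≤ t ^ s := Real.rpow_le_rpow_of_exponent_ge h0 ht1 hs1
        rw [Real.rpow_one] at this
        have h1m : (1:ℝ) ≤ max 1 s := le_max_left _ _
        nlinarith
  have h2 : min 1 γ * (1 - t) ≤ 1 - t ^ γ := by
    rcases le_total 1 γ with hg1 | hg1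
    · rcases eq_or_lt_of_le ht0 with h0 | h0
      · rw [← h0, Real.zero_rpow hγ.ne']
        have : min 1 γ ≤ 1 := min_le_left _ _
        nlinarith
      · have : t ^ γ ≤ t ^ (1:ℝ) := Real.rpow_le_rpow_of_exponent_ge h0 ht1 hg1
        rw [Real.rpow_one] at this
        have : min 1 γ ≤ 1 := min_le_left _ _
        nlinarith [Real.rpow_le_rpow_of_exponent_ge (show (0:ℝ) < t from h0) ht1 hg1,
          Real.rpow_one t]
    · have hb : (1 + (t - 1)) ^ γ ≤ 1 + γ * (t - 1) :=
        rpow_one_add_le_one_add_mul_self (by linarith) hγ.le hg1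
      have ht : (1 + (t - 1)) = t := by ring
      rw [ht] at hb
      have : min 1 γ = γ := min_eq_right hg1
      rw [this]; nlinarith
  have hM1 : (1:ℝ) ≤ max 1 s := le_max_left _ _
  have hm1 : min 1 γ ≤ 1 := min_le_left _ _
  have hmpos : 0 < min 1 γ := lt_min one_pos hγ
  have hts0 : 0 ≤ 1 - t ^ s := by linarith
  have ht0' : 0 ≤ 1 - t := by linarith
  have hsq : (1 - t ^ s) ^ 2 ≤ (max 1 s) ^ 2 * (1 - t) ^ 2 := by nlinarith
  have : min 1 γ / (max 1 s) ^ 2 * ((max 1 s) ^ 2 * (1 - t) ^ 2)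
      = min 1 γ * (1 - t) ^ 2 := by
    field_simp
  calc min 1 γ / (max 1 s) ^ 2 * (1 - t ^ s) ^ 2
      ≤ min 1 γ / (max 1 s) ^ 2 * ((max 1 s) ^ 2 * (1 - t) ^ 2) := by
        apply mul_le_mul_of_nonneg_left hsq; positivity
    _ = min 1 γ * (1 - t) ^ 2 := this
    _ = (min 1 γ * (1 - t)) * (1 - t) := by ring
    _ ≤ (1 - t ^ γ) * (1 - t) := mul_le_mul_of_nonneg_right h2 ht0'
    _ = (1 - t) * (1 - t ^ γ) := by ring

lemma core (γ : ℝ) (hγ : 0 < γ) (a b : ℝ) (hb : 0 ≤ b) (hba : b ≤ a) :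
    min 1 γ / (max 1 ((1 + γ) / 2)) ^ 2 * (a ^ ((1 + γ) / 2) - b ^ ((1 + γ) / 2)) ^ 2
      ≤ (a - b) * (a ^ γ - b ^ γ) := by
  set s : ℝ := (1 + γ) / 2 with hs
  have ha : 0 ≤ a := hb.trans hba
  rcases eq_or_lt_of_le ha with h0 | h0
  · have hb0 : b = 0 := le_antisymm (hba.trans h0.ge) hb
    subst hb0
    rw [← h0]
    simp
  · set t : ℝ := b / a with htdef
    have ht0 : 0 ≤ t := div_nonneg hb h0.le
    have ht1 : t ≤ 1 := (div_le_one h0).mpr hba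
    have hbt : b = a * t := by rw [htdef]; field_simp
    have hmul : ∀ p : ℝ, b ^ p = a ^ p * t ^ p := by
      intro p; rw [hbt, Real.mul_rpow h0.le ht0]
    have e1 : a ^ s - b ^ s = a ^ s * (1 - t ^ s) := by rw [hmul]; ring
    have e2 : a ^ γ - b ^ γ = a ^ γ * (1 - t ^ γ) := by rw [hmul]; ring
    have e3 : a - b = a * (1 - t) := by rw [hbt]; ring
    have e4 : a ^ s * a ^ s = a * a ^ γ := by
      have h1 : a ^ s * a ^ s = a ^ (s + s) := (Real.rpow_add h0 s s).symm
      have h2 : a ^ ((1:ℝ) + γ) = a * a ^ γ := by rw [Real.rpow_add h0, Real.rpow_one]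
      have h3 : s + s = 1 + γ := by rw [hs]; ring
      rw [h1, h3, h2]
    rw [e1, e2, e3]
    have hk := key γ hγ t ht0 ht1
    calc min 1 γ / (max 1 s) ^ 2 * (a ^ s * (1 - t ^ s)) ^ 2
        = (a ^ s * a ^ s) * (min 1 γ / (max 1 s) ^ 2 * (1 - t ^ s) ^ 2) := by ring
      _ ≤ (a ^ s * a ^ s) * ((1 - t) * (1 - t ^ γ)) := by
          apply mul_le_mul_of_nonneg_left hk; positivity
      _ = (a * a ^ γ) * ((1 - t) * (1 - t ^ γ)) := by rw [e4]
      _ = a * (1 - t) * (a ^ γ * (1 - t ^ γ)) := by ring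

/-- Numerical inequality: for all `γ > 0` there exists `c > 0` such that for all
`a, b ≥ 0`, `(a - b)(a^γ - b^γ) ≥ c |a^((1+γ)/2) - b^((1+γ)/2)|²`. -/
theorem stmt0 (γ : ℝ) (hγ : 0 < γ) :
    ∃ c > 0, ∀ a b : ℝ, 0 ≤ a → 0 ≤ b →
      c * |a ^ ((1 + γ) / 2) - b ^ ((1 + γ) / 2)| ^ 2 ≤ (a - b) * (a ^ γ - b ^ γ) := by
  refine ⟨min 1 γ / (max 1 ((1 + γ) / 2)) ^ 2, by positivity, fun a b ha hb => ?_⟩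
  rw [sq_abs]
  rcases le_total b a with h | h
  · exact core γ hγ a b hb h
  · have := core γ hγ b a ha h
    calc min 1 γ / (max 1 ((1 + γ) / 2)) ^ 2 * (a ^ ((1 + γ) / 2) - b ^ ((1 + γ) / 2)) ^ 2
        = min 1 γ / (max 1 ((1 + γ) / 2)) ^ 2 * (b ^ ((1 + γ) / 2) - a ^ ((1 + γ) / 2)) ^ 2 := by
          ring
      _ ≤ (b - a) * (b ^ γ - a ^ γ) := this
      _ = (a - b) * (a ^ γ - b ^ γ) := by ring
end

section
/- Let q > 1 with q' = q/(q-1), let 1/2 < s < 1, N > q'(2s-1), and m ≥ N/(q'(2s-1)). Let f ∈ L^m(Ω) with Ω ⊂ ℝ^N bounded, extended by zero to ℝ^N. Then for every compact set E ⊂ ℝ^N and every φ ∈ C_c^∞(ℝ^N) with φ ≥ χ_E, one has ∫_E f dx ≤ ‖f‖_{L^m(Ω)} · ‖f‖-independent constant times (∬ |φ(x)-φ(y)|^{q'} / |x-y|^{N+q'(2s-1)} dx dy), i.e. ∫_E f ≤ C(Ω) ‖f‖_{L^m(Ω)} cap_{2s-1,q'}(E). -/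
open MeasureTheory

open Real Metric ENNReal Module

lemma chain_lemma (θ lam c₁ : ℝ) (hθ0 : 0 < θ) (hθ1 : θ < 1) (hlam0 : 0 < lam)
    (hlam1 : lam < 1) (hc₁ : 0 < c₁) :
    ∃ C₂ > 0, ∀ (S v D : ℝ) (a : ℕ → ℝ), 0 < v → (∀ k, v ≤ a k) → (∀ k, a k ≤ S) →
      (∀ k, c₁ * lam ^ (k + 1) * a k * a (k + 1) ^ (-θ) ≤ D) → v ^ (1 - θ) ≤ C₂ * D := by
  set γ : ℝ := -Real.log lam with hγdef
  have hγ : 0 < γ := neg_pos.mpr (Real.log_neg hlam0 hlam1)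
  set c : ℝ := γ / (1 - θ) with hcdef
  have hc : 0 < c := div_pos hγ (by linarith)
  have hcγ : c * (1 - θ) = γ := by
    rw [hcdef, div_mul_cancel₀ _ (by linarith : (1:ℝ) - θ ≠ 0)]
  set Δ : ℝ := γ + 3 * (c * θ) + 1 with hΔdef
  have hΔpos : 0 < Δ := by positivity
  refine ⟨Real.exp Δ / c₁, by positivity, ?_⟩
  intro S v D a hv hva haS hk
  by_contra hcon
  push_neg at hcon
  have hak : ∀ k, 0 < a k := fun k => lt_of_lt_of_le hv (hva k)
  have hD : 0 < D :=
    lt_of_lt_of_le (mul_pos (mul_pos (mul_pos hc₁ (pow_pos hlam0 _)) (hak 0))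
      (Real.rpow_pos_of_pos (hak 1) _)) (hk 0)
  have hCD : Real.exp Δ / c₁ * D < v ^ (1 - θ) := hcon
  set w : ℕ → ℝ := fun k => Real.log (a k / v) with hwdef
  have hw0 : ∀ k, 0 ≤ w k := by
    intro k
    apply Real.log_nonneg
    rw [le_div_iff₀ hv]
    simpa using hva k
  have key : ∀ k : ℕ, Δ - γ * (k + 1) + w k < θ * w (k + 1) := by
    intro k
    have h1 : c₁ * lam ^ (k + 1) * a k * a (k + 1) ^ (-θ) ≤ D := hk k
    have h2 : Real.exp Δ / c₁ * (c₁ * lam ^ (k + 1) * a k * a (k + 1) ^ (-θ)) < v ^ (1 - θ) := by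
      calc Real.exp Δ / c₁ * (c₁ * lam ^ (k + 1) * a k * a (k + 1) ^ (-θ))
          ≤ Real.exp Δ / c₁ * D := by
            apply mul_le_mul_of_nonneg_left h1 (by positivity)
        _ < v ^ (1 - θ) := hCD
    have h3 : Real.exp Δ * lam ^ (k + 1) * a k * a (k + 1) ^ (-θ) < v ^ (1 - θ) := by
      have heq : Real.exp Δ / c₁ * (c₁ * lam ^ (k + 1) * a k * a (k + 1) ^ (-θ))
          = Real.exp Δ * lam ^ (k + 1) * a k * a (k + 1) ^ (-θ) := by
        field_simp
      linarith [h2, heq.symm.le]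
    have hpos1 : (0:ℝ) < Real.exp Δ * lam ^ (k + 1) := by positivity
    have hpos2 : (0:ℝ) < Real.exp Δ * lam ^ (k + 1) * a k := mul_pos hpos1 (hak k)
    have hpos3 : (0:ℝ) < a (k + 1) ^ (-θ) := Real.rpow_pos_of_pos (hak _) _
    have hlog : Δ + (k + 1 : ℝ) * Real.log lam + Real.log (a k) + (-θ) * Real.log (a (k + 1))
        < (1 - θ) * Real.log v := by
      have hlhs : Real.log (Real.exp Δ * lam ^ (k + 1) * a k * a (k + 1) ^ (-θ))
          = Δ + (k + 1 : ℝ) * Real.log lam + Real.log (a k) + (-θ) * Real.log (a (k + 1)) := by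
        rw [Real.log_mul hpos2.ne' hpos3.ne', Real.log_mul hpos1.ne' (hak k).ne',
          Real.log_mul (Real.exp_pos _).ne' (pow_pos hlam0 _).ne', Real.log_exp,
          Real.log_pow, Real.log_rpow (hak _)]
        push_cast
        ring
      calc Δ + (k + 1 : ℝ) * Real.log lam + Real.log (a k) + (-θ) * Real.log (a (k + 1))
          = Real.log (Real.exp Δ * lam ^ (k + 1) * a k * a (k + 1) ^ (-θ)) := hlhs.symm
        _ < Real.log (v ^ (1 - θ)) := Real.log_lt_log (mul_pos hpos2 hpos3) h3
        _ = (1 - θ) * Real.log v := Real.log_rpow hv _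
    have hwk : w k = Real.log (a k) - Real.log v := by
      rw [hwdef]; exact Real.log_div (hak k).ne' hv.ne'
    have hwk1 : w (k + 1) = Real.log (a (k + 1)) - Real.log v := by
      rw [hwdef]; exact Real.log_div (hak (k + 1)).ne' hv.ne'
    rw [hwk, hwk1, hγdef]
    nlinarith [hlog]
  have grow : ∀ k : ℕ, 1 ≤ k → c * (k + 1) ≤ w k := by
    intro k hk1
    induction k with
    | zero => omega
    | succ n ih =>
      rcases Nat.lt_or_ge n 1 with h1 | h1
      · -- n = 0 : show c * 2 ≤ w 1
        have hn : n = 0 := by omega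
        subst hn
        have h := key 0
        have h0 := hw0 0
        have hθw1 : θ * w 1 > 3 * (c * θ) + 1 := by
          push_cast at h
          simp only [hΔdef] at h
          linarith
        have hw1 : 2 * c ≤ w 1 := by nlinarith
        push_cast
        linarith
      · have ihn := ih h1
        have h := key n
        -- θ * w (n+1) > Δ - γ(n+1) + w n ≥ Δ - γ(n+1) + c(n+1)
        have h2 : Δ - γ * ((n:ℝ) + 1) + c * ((n:ℝ) + 1) < θ * w (n + 1) := by
          push_cast at h
          linarith
        have hcθ : c - γ = c * θ := by linarith [hcγ]
        have hΔcθ : c * θ ≤ Δ := by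
          simp only [hΔdef]; nlinarith
        have h3 : θ * (c * ((n:ℝ) + 2)) ≤ Δ - γ * ((n:ℝ) + 1) + c * ((n:ℝ) + 1) := by
          nlinarith
        have h4 : θ * (c * ((n:ℝ) + 2)) < θ * w (n + 1) := lt_of_le_of_lt h3 h2
        have h5 : c * ((n:ℝ) + 2) < w (n + 1) := (mul_lt_mul_iff_right₀ hθ0).mp h4
        push_cast
        linarith
  obtain ⟨k₀, hk₀⟩ := exists_nat_gt (S / v / c)
  set k := k₀ + 1 with hkdef
  have hwk : c * (k + 1) ≤ w k := grow k (by omega)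
  have hexp : Real.exp (c * (k + 1)) ≤ a k / v := by
    rw [← Real.exp_log (x := a k / v) (div_pos (hak k) hv)]
    exact Real.exp_le_exp.mpr hwk
  have h1pc : (1 : ℝ) + c * (k + 1) ≤ Real.exp (c * (k + 1)) := by
    linarith [Real.add_one_le_exp (c * (k + 1))]
  have hSv : S / v < c * k₀ := by
    rwa [div_lt_iff₀ hc, mul_comm] at hk₀
  have hfin : S / v < a k / v := by
    have hck : c * k₀ ≤ c * ((k:ℝ) + 1) := by
      apply mul_le_mul_of_nonneg_left _ hc.le
      push_cast [hkdef]; linarith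
    calc S / v < c * k₀ := hSv
      _ ≤ c * ((k:ℝ) + 1) := hck
      _ < 1 + c * ((k:ℝ) + 1) := by linarith
      _ ≤ Real.exp (c * ((k:ℝ) + 1)) := by linarith [Real.add_one_le_exp (c * ((k:ℝ) + 1))]
      _ ≤ a k / v := hexp
  have hlt : S < a k := by
    have hmul := mul_lt_mul_of_pos_right hfin hv
    rwa [div_mul_cancel₀ _ hv.ne', div_mul_cancel₀ _ hv.ne'] at hmul
  linarith [haS k]


section AuxCap

variable {N : ℕ}

local notation "X" => EuclideanSpace ℝ (Fin N)

lemma lintegral_ball_rpow_lt_top (hN : 0 < N) (e : ℝ) (he : -(N:ℝ) < e) :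
    ∫⁻ z in ball (0 : X) 1, ENNReal.ofReal (‖z‖ ^ e) < ∞ := by
  haveI : Nonempty (Fin N) := ⟨⟨0, hN⟩⟩
  haveI : Nontrivial X := inferInstance
  rcases le_or_gt 0 e with he0 | he0
  · calc ∫⁻ z in ball (0 : X) 1, ENNReal.ofReal (‖z‖ ^ e)
        ≤ ∫⁻ _ in ball (0 : X) 1, 1 := by
          apply setLIntegral_mono (by fun_prop)
          intro z hz
          simp only [mem_ball, dist_zero_right] at hz
          exact ENNReal.ofReal_le_one.mpr (Real.rpow_le_one (norm_nonneg _) hz.le he0)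
      _ = volume (ball (0 : X) 1) := by simp
      _ < ∞ := measure_ball_lt_top
  · -- dyadic shells
    set S : ℕ → Set X := fun j => ball 0 ((1/2 : ℝ) ^ j) \ ball 0 ((1/2 : ℝ) ^ (j + 1)) with hSdef
    have hcover : ball (0 : X) 1 \ {0} ⊆ ⋃ j, S j := by
      intro z hz
      obtain ⟨hz1, hz0⟩ := hz
      simp only [mem_ball, dist_zero_right] at hz1
      have hzn : 0 < ‖z‖ := by
        simpa [norm_pos_iff] using hz0
      have hex : ∃ j : ℕ, (1/2 : ℝ) ^ (j + 1) ≤ ‖z‖ := by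
        obtain ⟨n, hn⟩ := exists_pow_lt_of_lt_one hzn (by norm_num : (1/2 : ℝ) < 1)
        exact ⟨n, by
          calc (1/2 : ℝ) ^ (n + 1) ≤ (1/2 : ℝ) ^ n := by
                apply pow_le_pow_of_le_one (by norm_num) (by norm_num) (by omega)
            _ ≤ ‖z‖ := hn.le⟩
      set j₀ := Nat.find hex with hj₀
      refine Set.mem_iUnion.mpr ⟨j₀, ?_, ?_⟩
      · simp only [mem_ball, dist_zero_right]
        rcases Nat.eq_zero_or_pos j₀ with h0 | h0
        · rw [h0]; simpa using hz1
        · have := Nat.find_min hex (m := j₀ - 1) (by omega)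
          push_neg at this
          have : ‖z‖ < (1/2:ℝ) ^ (j₀ - 1 + 1) := this
          have hj : j₀ - 1 + 1 = j₀ := by omega
          rwa [hj] at this
      · simp only [mem_ball, dist_zero_right, not_lt]
        exact Nat.find_spec hex
    set u : ℝ := (1/2 : ℝ) ^ e with hudef
    have hu : 0 < u := Real.rpow_pos_of_pos (by norm_num) _
    set ρ : ℝ := u * (1/2 : ℝ) ^ N with hρdef
    have hρ0 : 0 < ρ := by positivity
    have hρ1 : ρ < 1 := by
      have hρeq : ρ = (1/2:ℝ) ^ (e + (N:ℝ)) := by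
        rw [Real.rpow_add (by norm_num : (0:ℝ) < 1/2), Real.rpow_natCast]
      rw [hρeq]
      exact Real.rpow_lt_one (by norm_num) (by norm_num) (by linarith)
    have hierm : ∀ j : ℕ, ∫⁻ z in S j, ENNReal.ofReal (‖z‖ ^ e)
        ≤ volume (ball (0:X) 1) * (ENNReal.ofReal u * ENNReal.ofReal ρ ^ j) := by
      intro j
      have hbound : ∀ z ∈ S j, ENNReal.ofReal (‖z‖ ^ e) ≤
          ENNReal.ofReal (((1/2:ℝ) ^ (j+1)) ^ e) := by
        intro z hz
        obtain ⟨_, hz2⟩ := hz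
        simp only [mem_ball, dist_zero_right, not_lt] at hz2
        apply ENNReal.ofReal_le_ofReal
        exact Real.rpow_le_rpow_of_nonpos (by positivity) hz2 he0.le
      calc ∫⁻ z in S j, ENNReal.ofReal (‖z‖ ^ e)
          ≤ ∫⁻ _ in S j, ENNReal.ofReal (((1/2:ℝ) ^ (j+1)) ^ e) := by
            exact setLIntegral_mono (by fun_prop) hbound
        _ = ENNReal.ofReal (((1/2:ℝ) ^ (j+1)) ^ e) * volume (S j) := by
            rw [setLIntegral_const]
        _ ≤ ENNReal.ofReal (((1/2:ℝ) ^ (j+1)) ^ e) * volume (ball (0:X) ((1/2:ℝ) ^ j)) := by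
            apply mul_le_mul_right
            exact measure_mono Set.diff_subset
        _ = volume (ball (0:X) 1) * (ENNReal.ofReal u * ENNReal.ofReal ρ ^ j) := by
            rw [Measure.addHaar_ball volume 0 (by positivity : (0:ℝ) ≤ (1/2:ℝ)^j)]
            rw [finrank_euclideanSpace_fin]
            have h1 : (((1/2:ℝ) ^ (j+1)) ^ e) = u * u ^ j := by
              rw [← Real.rpow_natCast (1/2:ℝ) (j+1), ← Real.rpow_mul (by norm_num : (0:ℝ) ≤ 1/2),
                mul_comm, Real.rpow_mul (by norm_num : (0:ℝ) ≤ 1/2), Real.rpow_natCast,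
                ← hudef, pow_succ, mul_comm]
            have h2 : ((1/2:ℝ) ^ j) ^ N = ((1/2:ℝ)^N) ^ j := by
              rw [← pow_mul, ← pow_mul, Nat.mul_comm]
            rw [h1, h2]
            rw [ENNReal.ofReal_mul hu.le, ENNReal.ofReal_pow hu.le]
            rw [ENNReal.ofReal_pow (by positivity)]
            rw [hρdef, ENNReal.ofReal_mul hu.le, ENNReal.ofReal_pow (by norm_num), mul_pow]
            ring
    calc ∫⁻ z in ball (0 : X) 1, ENNReal.ofReal (‖z‖ ^ e)
        = ∫⁻ z in ball (0 : X) 1 \ {0}, ENNReal.ofReal (‖z‖ ^ e) := by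
          exact setLIntegral_congr
            ((MeasureTheory.diff_null_ae_eq_self (measure_singleton (0:X))).symm)
      _ ≤ ∫⁻ z in ⋃ j, S j, ENNReal.ofReal (‖z‖ ^ e) := lintegral_mono_set hcover
      _ ≤ ∑' j, ∫⁻ z in S j, ENNReal.ofReal (‖z‖ ^ e) := lintegral_iUnion_le _ _
      _ ≤ ∑' j, volume (ball (0:X) 1) * (ENNReal.ofReal u * ENNReal.ofReal ρ ^ j) := by
          exact ENNReal.tsum_le_tsum hierm
      _ = volume (ball (0:X) 1) * ENNReal.ofReal u * ∑' j, ENNReal.ofReal ρ ^ j := by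
          rw [ENNReal.tsum_mul_left]
          rw [ENNReal.tsum_mul_left]
          ring
      _ < ∞ := by
          apply ENNReal.mul_lt_top
          · exact ENNReal.mul_lt_top measure_ball_lt_top ENNReal.ofReal_lt_top
          · rw [ENNReal.tsum_geometric]
            apply ENNReal.inv_lt_top.mpr
            rw [tsub_pos_iff_lt]
            exact ENNReal.ofReal_lt_one.mpr hρ1

lemma lintegral_G_lt_top (hN : 0 < N) (p α L M : ℝ) (hp : 0 < p) (hα : 0 < α)
    (hpα : α < p) (hL : 0 ≤ L) (hM : 0 ≤ M) :
    ∫⁻ z : X, ENNReal.ofReal (min (L * ‖z‖) M ^ p / ‖z‖ ^ ((N:ℝ) + α)) < ∞ := by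
  haveI : Nonempty (Fin N) := ⟨⟨0, hN⟩⟩
  haveI : Nontrivial X := inferInstance
  have hmeas : Measurable fun z : X => ENNReal.ofReal (min (L * ‖z‖) M ^ p / ‖z‖ ^ ((N:ℝ) + α)) := by
    fun_prop
  rw [← lintegral_add_compl _ (measurableSet_ball (x := (0:X)) (ε := 1))]
  apply ENNReal.add_lt_top.mpr
  constructor
  · -- near zero
    set e : ℝ := p - ((N:ℝ) + α) with hedef
    have he : -(N:ℝ) < e := by simp only [hedef]; linarith
    calc ∫⁻ z in ball (0:X) 1, ENNReal.ofReal (min (L * ‖z‖) M ^ p / ‖z‖ ^ ((N:ℝ) + α))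
        ≤ ∫⁻ z in ball (0:X) 1, ENNReal.ofReal (L ^ p) * ENNReal.ofReal (‖z‖ ^ e) := by
          apply setLIntegral_mono (by fun_prop)
          intro z _
          rcases eq_or_ne z 0 with rfl | hz
          · have h0 : ‖(0:X)‖ ^ ((N:ℝ) + α) = 0 := by
              rw [norm_zero]; exact Real.zero_rpow (by positivity)
            rw [h0]
            simp
          · have hzn : 0 < ‖z‖ := norm_pos_iff.mpr hz
            rw [← ENNReal.ofReal_mul (by positivity)]
            apply ENNReal.ofReal_le_ofReal
            have hnum : min (L * ‖z‖) M ^ p ≤ L ^ p * ‖z‖ ^ p := by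
              rw [← Real.mul_rpow hL (norm_nonneg z)]
              apply Real.rpow_le_rpow (le_min (by positivity) hM) (min_le_left _ _) hp.le
            calc min (L * ‖z‖) M ^ p / ‖z‖ ^ ((N:ℝ) + α)
                ≤ L ^ p * ‖z‖ ^ p / ‖z‖ ^ ((N:ℝ) + α) := by
                  apply div_le_div_of_nonneg_right hnum (Real.rpow_pos_of_pos hzn ((N:ℝ) + α)).le |>.trans_eq rfl
              _ = L ^ p * ‖z‖ ^ e := by
                  rw [hedef, Real.rpow_sub hzn, mul_div_assoc]
      _ = ENNReal.ofReal (L ^ p) * ∫⁻ z in ball (0:X) 1, ENNReal.ofReal (‖z‖ ^ e) := by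
          rw [lintegral_const_mul' _ _ ENNReal.ofReal_ne_top]
      _ < ∞ := ENNReal.mul_lt_top ENNReal.ofReal_lt_top (lintegral_ball_rpow_lt_top hN e he)
  · -- far away
    have hNα : (finrank ℝ X : ℝ) < (N:ℝ) + α := by
      rw [finrank_euclideanSpace_fin]; linarith
    calc ∫⁻ z in (ball (0:X) 1)ᶜ, ENNReal.ofReal (min (L * ‖z‖) M ^ p / ‖z‖ ^ ((N:ℝ) + α))
        ≤ ∫⁻ z in (ball (0:X) 1)ᶜ,
            ENNReal.ofReal (M ^ p * 2 ^ ((N:ℝ) + α)) * ENNReal.ofReal ((1 + ‖z‖) ^ (-((N:ℝ) + α))) := by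
          apply setLIntegral_mono (by fun_prop)
          intro z hz
          simp only [Set.mem_compl_iff, mem_ball, dist_zero_right, not_lt] at hz
          have hzn : (0:ℝ) < ‖z‖ := lt_of_lt_of_le one_pos hz
          rw [← ENNReal.ofReal_mul (by positivity)]
          apply ENNReal.ofReal_le_ofReal
          have hnum : min (L * ‖z‖) M ^ p ≤ M ^ p :=
            Real.rpow_le_rpow (le_min (by positivity) hM) (min_le_right _ _) hp.le
          have hden : (1 + ‖z‖) ^ ((N:ℝ) + α) ≤ 2 ^ ((N:ℝ) + α) * ‖z‖ ^ ((N:ℝ) + α) := by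
            rw [← Real.mul_rpow (by norm_num) (norm_nonneg z)]
            apply Real.rpow_le_rpow (by positivity) (by linarith) (by positivity)
          have hd1 : (0:ℝ) < ‖z‖ ^ ((N:ℝ) + α) := Real.rpow_pos_of_pos hzn _
          have hd2 : (0:ℝ) < (1 + ‖z‖) ^ ((N:ℝ) + α) := Real.rpow_pos_of_pos (by positivity) _
          rw [Real.rpow_neg (by positivity), mul_assoc, ← div_eq_mul_inv]
          calc min (L * ‖z‖) M ^ p / ‖z‖ ^ ((N:ℝ) + α)
              ≤ M ^ p / ‖z‖ ^ ((N:ℝ) + α) := div_le_div_of_nonneg_right hnum hd1.le |>.trans_eq rfl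
            _ ≤ M ^ p * 2 ^ ((N:ℝ) + α) / (1 + ‖z‖) ^ ((N:ℝ) + α) := by
                rw [div_le_div_iff₀ hd1 hd2]
                calc M ^ p * (1 + ‖z‖) ^ ((N:ℝ) + α)
                    ≤ M ^ p * (2 ^ ((N:ℝ) + α) * ‖z‖ ^ ((N:ℝ) + α)) := by
                      apply mul_le_mul_of_nonneg_left hden (by positivity)
                  _ = M ^ p * 2 ^ ((N:ℝ) + α) * ‖z‖ ^ ((N:ℝ) + α) := by ring
            _ = M ^ p * (2 ^ ((N:ℝ) + α) / (1 + ‖z‖) ^ ((N:ℝ) + α)) := by ring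
      _ ≤ ENNReal.ofReal (M ^ p * 2 ^ ((N:ℝ) + α)) *
            ∫⁻ z : X, ENNReal.ofReal ((1 + ‖z‖) ^ (-((N:ℝ) + α))) := by
          rw [← lintegral_const_mul' _ _ ENNReal.ofReal_ne_top]
          exact setLIntegral_le_lintegral _ _
      _ < ∞ := ENNReal.mul_lt_top ENNReal.ofReal_lt_top (finite_integral_one_add_norm hNα)

-- the rpow algebra identity
lemma c1_identity (N' : ℕ) (hN : 0 < N') (α κ A : ℝ) (hκ : 0 < κ) (hA : 0 < A) :
    (2 * (κ * A) ^ ((1:ℝ)/N')) ^ (-((N':ℝ) + α)) * A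
      = 2 ^ (-((N':ℝ) + α)) * κ ^ (-((N':ℝ) + α)/N') * A ^ (-(α/N')) := by
  have hκA : 0 < κ * A := mul_pos hκ hA
  have hN' : (N':ℝ) ≠ 0 := Nat.cast_ne_zero.mpr hN.ne'
  rw [Real.mul_rpow (by norm_num) (Real.rpow_nonneg hκA.le _)]
  rw [← Real.rpow_mul hκA.le]
  rw [Real.mul_rpow hκ.le hA.le]
  have hexp : 1 / (N':ℝ) * -((N':ℝ) + α) = -((N':ℝ) + α) / N' := by ring
  rw [hexp]
  have hA1 : A ^ (-((N':ℝ) + α)/N') * A = A ^ (-(α/N')) := by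
    nth_rewrite 2 [← Real.rpow_one A]
    rw [← Real.rpow_add hA]
    congr 1
    field_simp
    ring
  calc 2 ^ (-((N':ℝ) + α)) * (κ ^ (-((N':ℝ) + α)/N') * A ^ (-((N':ℝ) + α)/N')) * A
      = 2 ^ (-((N':ℝ) + α)) * κ ^ (-((N':ℝ) + α)/N') * (A ^ (-((N':ℝ) + α)/N') * A) := by ring
    _ = 2 ^ (-((N':ℝ) + α)) * κ ^ (-((N':ℝ) + α)/N') * A ^ (-(α/N')) := by rw [hA1]

set_option maxHeartbeats 2000000 in
lemma main_capacity (hN : 0 < N) (p α : ℝ) (hp : 0 < p) (hα : 0 < α)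
    (hαN : α < (N:ℝ)) (hpα : α < p) :
    ∃ C₂ > 0, ∀ φ : X → ℝ, ContDiff ℝ (⊤ : ℕ∞) φ → HasCompactSupport φ →
      ∀ v : ℝ, 0 < v → v ≤ (volume {x : X | 1 ≤ φ x}).toReal →
      v ^ (1 - α/(N:ℝ)) ≤ C₂ * ∫ x, ∫ y, |φ x - φ y| ^ p / ‖x - y‖ ^ ((N:ℝ) + α) := by
  haveI : Nonempty (Fin N) := ⟨⟨0, hN⟩⟩
  haveI : Nontrivial X := inferInstance
  -- geometric constants
  set ωe : ℝ≥0∞ := volume (ball (0:X) 1) with hωedef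
  have hωe0 : ωe ≠ 0 := (measure_ball_pos volume (0:X) one_pos).ne'
  have hωetop : ωe ≠ ∞ := measure_ball_lt_top.ne
  set ω : ℝ := ωe.toReal with hωdef
  have hω : 0 < ω := ENNReal.toReal_pos hωe0 hωetop
  have h2N : (1:ℝ) < 2 ^ N := one_lt_pow₀ (by norm_num) hN.ne'
  set κ : ℝ := 2 / ((2 ^ N - 1) * ω) with hκdef
  have hκ : 0 < κ := by
    apply div_pos (by norm_num)
    apply mul_pos (by linarith) hω
  set θ : ℝ := α / N with hθdef
  have hθ0 : 0 < θ := div_pos hα (by exact_mod_cast hN)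
  have hθ1 : θ < 1 := (div_lt_one (by exact_mod_cast hN)).mpr hαN
  set lam : ℝ := (1/2 : ℝ) ^ p with hlamdef
  have hlam0 : 0 < lam := Real.rpow_pos_of_pos (by norm_num) _
  have hlam1 : lam < 1 := Real.rpow_lt_one (by norm_num) (by norm_num) hp
  set c₁ : ℝ := 2 ^ (-((N:ℝ) + α)) * κ ^ (-((N:ℝ) + α)/N) with hc₁def
  have hc₁ : 0 < c₁ :=
    mul_pos (Real.rpow_pos_of_pos (by norm_num) _) (Real.rpow_pos_of_pos hκ _)
  obtain ⟨C₂, hC₂, hchain⟩ := chain_lemma θ lam c₁ hθ0 hθ1 hlam0 hlam1 hc₁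
  refine ⟨C₂, hC₂, ?_⟩
  intro φ hφ hsupp v hv hvle
  have hφc : Continuous φ := hφ.continuous
  -- the integrand
  set h : X → X → ℝ := fun x y => |φ x - φ y| ^ p / ‖x - y‖ ^ ((N:ℝ) + α) with hhdef
  have hhnn : ∀ x y, 0 ≤ h x y := fun x y =>
    div_nonneg (Real.rpow_nonneg (abs_nonneg _) _) (Real.rpow_nonneg (norm_nonneg _) _)
  have hmeas : Measurable (Function.uncurry fun x y : X => ENNReal.ofReal (h x y)) := by
    have := hφc.measurable
    fun_prop
  have hsec : ∀ x : X, Measurable fun y => ENNReal.ofReal (h x y) :=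
    fun x => hmeas.comp measurable_prodMk_left
  set P : ℝ≥0∞ := ∫⁻ x, ∫⁻ y, ENNReal.ofReal (h x y) with hPdef
  have hinner_meas : Measurable fun x => ∫⁻ y, ENNReal.ofReal (h x y) :=
    Measurable.lintegral_prod_right hmeas
  -- ## Step 1 : P < ∞
  obtain ⟨L, hLip⟩ := hφ.lipschitzWith_of_hasCompactSupport hsupp (by simp)
  obtain ⟨M, hM⟩ := hsupp.exists_bound_of_continuous hφc
  have hM0 : 0 ≤ M := le_trans (norm_nonneg (φ 0)) (hM 0)
  set G : X → ℝ≥0∞ := fun z => ENNReal.ofReal (min ((L:ℝ) * ‖z‖) (2*M) ^ p / ‖z‖ ^ ((N:ℝ) + α))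
    with hGdef
  have hGmeas : Measurable G := by fun_prop
  have hGsymm : ∀ z : X, G (-z) = G z := by
    intro z; simp only [hGdef, norm_neg]
  set IG : ℝ≥0∞ := ∫⁻ z, G z with hIGdef
  have hIG : IG < ∞ := lintegral_G_lt_top hN p α (L:ℝ) (2*M) hp hα hpα L.coe_nonneg
    (by linarith)
  set K : Set X := tsupport φ with hKdef
  have hKmeas : MeasurableSet K := (isClosed_tsupport φ).measurableSet
  have hKfin : volume K < ∞ := hsupp.measure_lt_top
  -- pointwise bound h ≤ G
  have hhG : ∀ x y : X, ENNReal.ofReal (h x y) ≤ G (x - y) := by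
    intro x y
    rcases eq_or_ne x y with rfl | hxy
    · simp only [hhdef, sub_self, norm_zero, abs_zero]
      have hz1 : (0:ℝ) ^ ((N:ℝ)+α) = 0 := Real.zero_rpow (by positivity)
      rw [hz1]
      simp
    · have hxyn : 0 < ‖x - y‖ := by
        rw [norm_pos_iff, sub_ne_zero]; exact hxy
      apply ENNReal.ofReal_le_ofReal
      apply div_le_div_of_nonneg_right _ (Real.rpow_pos_of_pos hxyn _).le |>.trans_eq rfl
      apply Real.rpow_le_rpow (abs_nonneg _) _ hp.le
      apply le_min
      · have := hLip.dist_le_mul x y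
        rwa [Real.dist_eq, dist_eq_norm] at this
      · calc |φ x - φ y| ≤ |φ x| + |φ y| := abs_sub _ _
          _ ≤ M + M := by
              have h1 := hM x; have h2 := hM y
              rw [Real.norm_eq_abs] at h1 h2
              linarith
          _ = 2*M := by ring
  -- vanishing off K
  have hzero : ∀ x y : X, x ∉ K → y ∉ K → ENNReal.ofReal (h x y) = 0 := by
    intro x y hx hy
    have hx0 : φ x = 0 := image_eq_zero_of_notMem_tsupport hx
    have hy0 : φ y = 0 := image_eq_zero_of_notMem_tsupport hy
    simp only [hhdef, hx0, hy0, sub_zero, abs_zero]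
    rw [Real.zero_rpow hp.ne', zero_div]
    simp
  set ind : X → ℝ≥0∞ := K.indicator 1 with hinddef
  have hindmeas : Measurable ind := measurable_one.indicator hKmeas
  have hindne : ∀ z : X, ind z ≠ ∞ := by
    intro z; rw [hinddef]; by_cases hz : z ∈ K <;> simp [hz]
  have hbd : ∀ x y : X, ENNReal.ofReal (h x y) ≤ ind x * G (x - y) + ind y * G (x - y) := by
    intro x y
    by_cases hx : x ∈ K
    · calc ENNReal.ofReal (h x y) ≤ G (x - y) := hhG x y
        _ ≤ ind x * G (x - y) + ind y * G (x - y) := by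
            rw [hinddef, Set.indicator_of_mem hx, Pi.one_apply, one_mul]
            exact le_add_right (le_refl _)
    by_cases hy : y ∈ K
    · calc ENNReal.ofReal (h x y) ≤ G (x - y) := hhG x y
        _ ≤ ind x * G (x - y) + ind y * G (x - y) := by
            rw [hinddef, Set.indicator_of_mem hy, Pi.one_apply, one_mul]
            exact le_add_left (le_refl _)
    · rw [hzero x y hx hy]; exact bot_le
  have hPle : P ≤ volume K * IG + volume K * IG := by
    have hstep1 : P ≤ ∫⁻ x, ∫⁻ y, (ind x * G (x - y) + ind y * G (x - y)) := by
      apply lintegral_mono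
      intro x
      apply lintegral_mono
      intro y
      exact hbd x y
    have hinner : ∀ x : X, ∫⁻ y, (ind x * G (x - y) + ind y * G (x - y))
        = ind x * IG + ∫⁻ y, ind y * G (x - y) := by
      intro x
      rw [lintegral_add_left (by fun_prop)]
      congr 1
      rw [lintegral_const_mul' _ _ (hindne _)]
      congr 1
      calc ∫⁻ y, G (x - y) = ∫⁻ y, G (y - x) := by
            apply lintegral_congr
            intro y
            rw [← hGsymm (y - x), neg_sub]
        _ = IG := lintegral_sub_right_eq_self G x
    have hswap : ∫⁻ x, ∫⁻ y, ind y * G (x - y) = volume K * IG := by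
      rw [lintegral_lintegral_swap (by fun_prop)]
      have : ∀ y : X, ∫⁻ x, ind y * G (x - y) = ind y * IG := by
        intro y
        rw [lintegral_const_mul' _ _ (hindne _)]
        rw [lintegral_sub_right_eq_self G y]
      simp_rw [this]
      rw [hinddef, lintegral_mul_const' _ _ hIG.ne, lintegral_indicator_one hKmeas]
    calc P ≤ ∫⁻ x, ∫⁻ y, (ind x * G (x - y) + ind y * G (x - y)) := hstep1
      _ = ∫⁻ x, (ind x * IG + ∫⁻ y, ind y * G (x - y)) := by
          apply lintegral_congr; intro x; exact hinner x
      _ = (∫⁻ x, ind x * IG) + ∫⁻ x, ∫⁻ y, ind y * G (x - y) := by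
          rw [lintegral_add_left (by fun_prop)]
      _ = volume K * IG + volume K * IG := by
          rw [hswap, hinddef, lintegral_mul_const' _ _ hIG.ne, lintegral_indicator_one hKmeas]
    -- done
  have hPfin : P < ∞ :=
    lt_of_le_of_lt hPle (by
      apply ENNReal.add_lt_top.mpr
      constructor <;> exact ENNReal.mul_lt_top hKfin hIG)
  -- ## Step 2 : representation of the double integral
  have hrepr : ∫ x, ∫ y, h x y = P.toReal := by
    have hinner_eq : ∀ x : X, ∫ y, h x y = (∫⁻ y, ENNReal.ofReal (h x y)).toReal := by
      intro x
      apply integral_eq_lintegral_of_nonneg_ae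
      · exact Filter.Eventually.of_forall (fun y => hhnn x y)
      · exact ((hsec x).ennreal_toReal.comp measurable_id).aestronglyMeasurable.congr
          (by
            apply Filter.Eventually.of_forall
            intro y
            simp [ENNReal.toReal_ofReal (hhnn x y)])
    rw [show (fun x => ∫ y, h x y) = fun x => (∫⁻ y, ENNReal.ofReal (h x y)).toReal from
      funext hinner_eq]
    rw [integral_eq_lintegral_of_nonneg_ae
      (Filter.Eventually.of_forall (fun x => ENNReal.toReal_nonneg))
      hinner_meas.ennreal_toReal.aestronglyMeasurable]
    congr 1
    apply lintegral_congr_ae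
    filter_upwards [ae_lt_top hinner_meas hPfin.ne] with x hx
    rw [ENNReal.ofReal_toReal hx.ne]
  -- ## Step 3 : level sets and per-scale lower bounds
  set A : ℕ → Set X := fun k => {x : X | (1/2:ℝ)^k ≤ φ x} with hAdef
  have hAmeas : ∀ k, MeasurableSet (A k) :=
    fun k => (isClosed_le continuous_const hφc).measurableSet
  have hAsub : ∀ k, A k ⊆ K := by
    intro k x hx
    apply subset_tsupport
    simp only [Function.mem_support]
    intro hc
    have hx' : (1/2:ℝ)^k ≤ φ x := hx
    rw [hc] at hx'
    have hk0 : (0:ℝ) < (1/2:ℝ)^k := by positivity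
    linarith
  have hAfin : ∀ k, volume (A k) ≠ ∞ :=
    fun k => (lt_of_le_of_lt (measure_mono (hAsub k)) hKfin).ne
  set a : ℕ → ℝ := fun k => (volume (A k)).toReal with hadef
  set S : ℝ := (volume K).toReal with hSdef
  have haS : ∀ k, a k ≤ S :=
    fun k => ENNReal.toReal_mono hKfin.ne (measure_mono (hAsub k))
  have hA0 : {x : X | 1 ≤ φ x} = A 0 := by
    ext x; simp [hAdef]
  have hva : ∀ k, v ≤ a k := by
    intro k
    have hsub : A 0 ⊆ A k := by
      intro x hx
      simp only [hAdef, Set.mem_setOf_eq] at hx ⊢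
      calc ((1:ℝ)/2)^k ≤ 1 := pow_le_one₀ (by norm_num) (by norm_num)
        _ = (1/2:ℝ)^0 := by norm_num
        _ ≤ φ x := hx
    calc v ≤ (volume {x : X | 1 ≤ φ x}).toReal := hvle
      _ = (volume (A 0)).toReal := by rw [hA0]
      _ ≤ a k := ENNReal.toReal_mono (hAfin k) (measure_mono hsub)
  have hapos : ∀ k, 0 < a k := fun k => lt_of_lt_of_le hv (hva k)
  have hofReal_a : ∀ k, ENNReal.ofReal (a k) = volume (A k) :=
    fun k => ENNReal.ofReal_toReal (hAfin k)
  have hlamk : ∀ n : ℕ, ((1/2:ℝ)^n)^p = lam^n := by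
    intro n
    rw [← Real.rpow_natCast (1/2:ℝ) n, ← Real.rpow_mul (by norm_num), mul_comm,
      Real.rpow_mul (by norm_num), Real.rpow_natCast]
  -- the per-scale estimate
  have htk : ∀ k : ℕ, c₁ * lam^(k+1) * a k * a (k+1) ^ (-θ) ≤ P.toReal := by
    intro k
    have ha' : 0 < a (k+1) := hapos (k+1)
    set ρ : ℝ := (κ * a (k+1)) ^ ((1:ℝ)/(N:ℝ)) with hρdef
    have hρ : 0 < ρ := Real.rpow_pos_of_pos (mul_pos hκ ha') _
    have hρN : ρ ^ (N:ℕ) = κ * a (k+1) := by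
      rw [← Real.rpow_natCast ρ N, hρdef, ← Real.rpow_mul (mul_pos hκ ha').le]
      have : (1:ℝ)/(N:ℝ) * (N:ℝ) = 1 := by
        field_simp
      rw [this, Real.rpow_one]
    -- annulus volume
    have hAnn : ∀ x : X, volume (ball x (2*ρ) \ ball x ρ) = 2 * volume (A (k+1)) := by
      intro x
      rw [measure_diff (ball_subset_ball (by linarith)) measurableSet_ball.nullMeasurableSet
        measure_ball_lt_top.ne]
      rw [Measure.addHaar_ball volume x (by positivity : (0:ℝ) ≤ 2*ρ),
        Measure.addHaar_ball volume x hρ.le, finrank_euclideanSpace_fin]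
      apply ENNReal.sub_eq_of_eq_add (ENNReal.mul_ne_top ENNReal.ofReal_ne_top hωetop)
      have hsplit : (2*ρ) ^ (N:ℕ) = κ * a (k+1) + 2 * a (k+1) / ω := by
        rw [mul_pow, hρN, hκdef]
        have hω' : ω ≠ 0 := hω.ne'
        have h2N1 : (2:ℝ)^N - 1 ≠ 0 := by linarith
        field_simp
        ring
      rw [hsplit, ENNReal.ofReal_add (by positivity) (by positivity)]
      rw [add_mul, ← hρN]
      have hYZ : ENNReal.ofReal (2 * a (k+1) / ω) * ωe = 2 * volume (A (k+1)) := by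
        rw [ENNReal.ofReal_div_of_pos hω, hωdef, ENNReal.ofReal_toReal hωetop,
          ENNReal.div_mul_cancel hωe0 hωetop, ENNReal.ofReal_mul (by norm_num), hofReal_a (k+1)]
        norm_num
      rw [hYZ, add_comm]
    -- difference with the level set
    have hdiff : ∀ x : X, volume (A (k+1))
        ≤ volume ((ball x (2*ρ) \ ball x ρ) \ A (k+1)) := by
      intro x
      have hsub : ball x (2*ρ) \ ball x ρ
          ⊆ ((ball x (2*ρ) \ ball x ρ) \ A (k+1)) ∪ A (k+1) := by
        intro z hz
        by_cases hzA : z ∈ A (k+1)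
        · exact Set.mem_union_right _ hzA
        · exact Set.mem_union_left _ ⟨hz, hzA⟩
      have h1 : 2 * volume (A (k+1))
          ≤ volume ((ball x (2*ρ) \ ball x ρ) \ A (k+1)) + volume (A (k+1)) := by
        rw [← hAnn x]
        exact (measure_mono hsub).trans (measure_union_le _ _)
      rw [two_mul] at h1
      exact (ENNReal.add_le_add_iff_right (hAfin (k+1))).mp h1
    -- pointwise bound on the annulus
    set bconst : ℝ := lam^(k+1) / (2*ρ) ^ ((N:ℝ)+α) with hbdef
    have hbpos : 0 < bconst := div_pos (pow_pos hlam0 _) (Real.rpow_pos_of_pos (by linarith) _)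
    have hpt : ∀ x ∈ A k, ∀ y ∈ (ball x (2*ρ) \ ball x ρ) \ A (k+1),
        ENNReal.ofReal bconst ≤ ENNReal.ofReal (h x y) := by
      intro x hx y hy
      obtain ⟨⟨hy1, hy2⟩, hy3⟩ := hy
      have hφx : (1/2:ℝ)^k ≤ φ x := hx
      have hφy : φ y < (1/2:ℝ)^(k+1) := by
        simp only [hAdef, Set.mem_setOf_eq, not_le] at hy3
        exact hy3
      have hhalf : (1/2:ℝ)^k - (1/2:ℝ)^(k+1) = (1/2:ℝ)^(k+1) := by
        rw [pow_succ]; ring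
      have hnum : (1/2:ℝ)^(k+1) ≤ |φ x - φ y| := by
        have : (1/2:ℝ)^(k+1) ≤ φ x - φ y := by linarith
        exact this.trans (le_abs_self _)
      have hd1 : ρ ≤ ‖x - y‖ := by
        simp only [mem_ball, not_lt] at hy2
        rwa [← dist_eq_norm, dist_comm]
      have hd2 : ‖x - y‖ ≤ 2*ρ := by
        simp only [mem_ball] at hy1
        rw [← dist_eq_norm, dist_comm]
        exact hy1.le
      apply ENNReal.ofReal_le_ofReal
      rw [hbdef, ← hlamk (k+1)]
      apply div_le_div₀ (Real.rpow_nonneg (abs_nonneg _) _)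
        (Real.rpow_le_rpow (by positivity) hnum hp.le)
        (Real.rpow_pos_of_pos (lt_of_lt_of_le hρ hd1) _)
        (Real.rpow_le_rpow (norm_nonneg _) hd2 (by positivity))
    -- integrate
    have hinner_k : ∀ x ∈ A k,
        ENNReal.ofReal bconst * volume (A (k+1)) ≤ ∫⁻ y, ENNReal.ofReal (h x y) := by
      intro x hx
      calc ENNReal.ofReal bconst * volume (A (k+1))
          ≤ ENNReal.ofReal bconst * volume ((ball x (2*ρ) \ ball x ρ) \ A (k+1)) :=
            mul_le_mul_right (hdiff x) _
        _ = ∫⁻ _ in (ball x (2*ρ) \ ball x ρ) \ A (k+1), ENNReal.ofReal bconst := by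
            rw [setLIntegral_const]
        _ ≤ ∫⁻ y in (ball x (2*ρ) \ ball x ρ) \ A (k+1), ENNReal.ofReal (h x y) :=
            setLIntegral_mono (hsec x) (hpt x hx)
        _ ≤ ∫⁻ y, ENNReal.ofReal (h x y) := setLIntegral_le_lintegral _ _
    have houter : ENNReal.ofReal bconst * volume (A (k+1)) * volume (A k) ≤ P := by
      calc ENNReal.ofReal bconst * volume (A (k+1)) * volume (A k)
          = ∫⁻ _ in A k, ENNReal.ofReal bconst * volume (A (k+1)) := by
            rw [setLIntegral_const]
        _ ≤ ∫⁻ x in A k, ∫⁻ y, ENNReal.ofReal (h x y) :=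
            setLIntegral_mono hinner_meas hinner_k
        _ ≤ ∫⁻ x, ∫⁻ y, ENNReal.ofReal (h x y) := setLIntegral_le_lintegral _ _
    have htoReal : bconst * a (k+1) * a k ≤ P.toReal := by
      have := ENNReal.toReal_mono hPfin.ne houter
      rwa [ENNReal.toReal_mul, ENNReal.toReal_mul, ENNReal.toReal_ofReal hbpos.le] at this
    have hident : c₁ * lam^(k+1) * a k * a (k+1) ^ (-θ) = bconst * a (k+1) * a k := by
      have hmain := c1_identity N hN α κ (a (k+1)) hκ ha'
      have hbc : bconst = lam^(k+1) * (2*ρ) ^ (-((N:ℝ)+α)) := by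
        rw [hbdef, Real.rpow_neg (by linarith), div_eq_mul_inv]
      rw [hbc]
      have hρform : (2 * ρ) ^ (-((N:ℝ)+α)) * a (k+1) = c₁ * a (k+1) ^ (-(α/(N:ℝ))) := by
        rw [hρdef]
        rw [hmain, hc₁def]
      have hθform : a (k+1) ^ (-θ) = a (k+1) ^ (-(α/(N:ℝ))) := by rw [hθdef]
      calc c₁ * lam^(k+1) * a k * a (k+1) ^ (-θ)
          = lam^(k+1) * (c₁ * a (k+1) ^ (-(α/(N:ℝ)))) * a k := by
            rw [hθform]; ring
        _ = lam^(k+1) * ((2 * ρ) ^ (-((N:ℝ)+α)) * a (k+1)) * a k := by rw [hρform]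
        _ = lam^(k+1) * (2*ρ) ^ (-((N:ℝ)+α)) * a (k+1) * a k := by ring
    rw [hident]
    exact htoReal
  -- ## conclusion
  have := hchain S v P.toReal a hv hva haS htk
  rw [hrepr]
  exact this


end AuxCap

set_option maxHeartbeats 1000000 in
/-- Capacitary estimate: for `f ∈ L^m(Ω)` (extended by zero outside the bounded set `Ω`)
with `m ≥ N/(q'(2s-1))`, there is `C = C(Ω) > 0` such that for every compact `E` and every
smooth compactly supported `φ ≥ χ_E`,
`∫_E f ≤ C ‖f‖_{L^m(Ω)} ∬ |φ(x)-φ(y)|^{q'}/|x-y|^{N+q'(2s-1)} dx dy`. -/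
theorem stmt12 (N : ℕ) (s q q' m : ℝ) (hs : 1 / 2 < s) (hs1 : s < 1) (hq : 1 < q)
    (hq' : q' = q / (q - 1)) (hN : q' * (2 * s - 1) < N) (hm : N / (q' * (2 * s - 1)) ≤ m)
    (Ω : Set (EuclideanSpace ℝ (Fin N))) (hΩ : Bornology.IsBounded Ω) :
    ∃ C > 0, ∀ f₀ : EuclideanSpace ℝ (Fin N) → ℝ,
      (∀ x, 0 ≤ f₀ x) → (∀ x ∉ Ω, f₀ x = 0) →
      MemLp f₀ (ENNReal.ofReal m) volume →
      ∀ E : Set (EuclideanSpace ℝ (Fin N)), IsCompact E →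
        ∀ φ : EuclideanSpace ℝ (Fin N) → ℝ, ContDiff ℝ (⊤ : ℕ∞) φ → HasCompactSupport φ →
          (∀ x ∈ E, 1 ≤ φ x) →
          ∫ x in E, f₀ x ≤
            C * (eLpNorm f₀ (ENNReal.ofReal m) volume).toReal *
              ∫ x, ∫ y, |φ x - φ y| ^ q' / ‖x - y‖ ^ ((N : ℝ) + q' * (2 * s - 1)) := by
  -- basic facts about the exponents
  have hq1 : 0 < q - 1 := by linarith
  have hq'1 : 1 < q' := by
    rw [hq', lt_div_iff₀ hq1]; linarith
  have hq'0 : 0 < q' := by linarith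
  set α : ℝ := q' * (2 * s - 1) with hαdef
  have h2s : 0 < 2 * s - 1 := by linarith
  have hα : 0 < α := mul_pos hq'0 h2s
  have hαq' : α < q' := by
    rw [hαdef]
    nth_rewrite 2 [← mul_one q']
    exact mul_lt_mul_of_pos_left (by linarith) hq'0
  have hN0 : 0 < N := by
    by_contra hc
    push_neg at hc
    interval_cases N
    simp only [Nat.cast_zero] at hN
    linarith
  have hNr : (0:ℝ) < N := by exact_mod_cast hN0
  have hm1 : 1 < m := by
    have h1 : (1:ℝ) < N / α := (one_lt_div hα).mpr hN
    linarith [hm]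
  have hm0 : 0 < m := by linarith
  set θ : ℝ := α / N with hθdef
  have hθ0 : 0 < θ := div_pos hα hNr
  have hθ1 : θ < 1 := (div_lt_one hNr).mpr hN
  have hθm : 1/m ≤ θ := by
    rw [hθdef, div_le_div_iff₀ hm0 hNr]
    have := (div_le_iff₀ hα).mp hm
    linarith
  -- capacity lemma
  obtain ⟨C₂, hC₂, hcap⟩ := main_capacity hN0 q' α hq'0 hα hN hαq'
  -- geometry of Ω
  have hΩc : Bornology.IsBounded (closure Ω) := hΩ.closure
  have hΩcfin : volume (closure Ω) < ∞ := hΩc.measure_lt_top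
  set vΩ : ℝ := (volume (closure Ω)).toReal with hvΩdef
  set C₁ : ℝ := (max 1 vΩ) ^ (θ - 1/m) with hC₁def
  have hC₁ : 0 < C₁ := Real.rpow_pos_of_pos (lt_of_lt_of_le one_pos (le_max_left _ _)) _
  refine ⟨C₁ * C₂, mul_pos hC₁ hC₂, ?_⟩
  intro f₀ hf₀nn hf₀zero hf₀mem E hE φ hφ hφsupp hφE
  set D : ℝ := ∫ x, ∫ y, |φ x - φ y| ^ q' / ‖x - y‖ ^ ((N : ℝ) + α) with hDdef
  have hDnn : 0 ≤ D :=
    integral_nonneg (fun x => integral_nonneg (fun y =>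
      div_nonneg (Real.rpow_nonneg (abs_nonneg _) _) (Real.rpow_nonneg (norm_nonneg _) _)))
  have hfnorm_nn : (0:ℝ) ≤ (eLpNorm f₀ (ENNReal.ofReal m) volume).toReal := ENNReal.toReal_nonneg
  -- the effective set
  set E' : Set (EuclideanSpace ℝ (Fin N)) := E ∩ closure Ω with hE'def
  have hE'meas : MeasurableSet E' :=
    (hE.isClosed.measurableSet).inter isClosed_closure.measurableSet
  have hE'fin : volume E' < ∞ :=
    lt_of_le_of_lt (measure_mono Set.inter_subset_right) hΩcfin
  -- reduction to E'
  haveI : IsFiniteMeasure (volume.restrict E) :=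
    ⟨by rw [Measure.restrict_apply_univ]; exact hE.measure_lt_top⟩
  have hIntE : IntegrableOn f₀ E volume := by
    have h1 : MemLp f₀ (ENNReal.ofReal m) (volume.restrict E) := hf₀mem.restrict E
    have h2 : MemLp f₀ 1 (volume.restrict E) :=
      h1.mono_exponent (ENNReal.one_le_ofReal.mpr hm1.le)
    exact memLp_one_iff_integrable.mp h2
  have hsplitE : ∫ x in E, f₀ x = ∫ x in E', f₀ x := by
    have hEeq : E' ∪ (E \ closure Ω) = E := Set.inter_union_diff E (closure Ω)
    have hdisj : Disjoint E' (E \ closure Ω) :=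
      Set.disjoint_sdiff_right.mono_left Set.inter_subset_right
    have hmeasd : MeasurableSet (E \ closure Ω) :=
      hE.isClosed.measurableSet.diff isClosed_closure.measurableSet
    have hint1 : IntegrableOn f₀ E' volume := hIntE.mono_set Set.inter_subset_left
    have hint2 : IntegrableOn f₀ (E \ closure Ω) volume := hIntE.mono_set Set.diff_subset
    calc ∫ x in E, f₀ x = ∫ x in E' ∪ (E \ closure Ω), f₀ x := by rw [hEeq]
      _ = (∫ x in E', f₀ x) + ∫ x in E \ closure Ω, f₀ x :=
          setIntegral_union hdisj hmeasd hint1 hint2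
      _ = ∫ x in E', f₀ x := by
          have : ∫ x in E \ closure Ω, f₀ x = 0 := by
            rw [setIntegral_congr_fun hmeasd (g := fun _ => (0:ℝ))
              (fun x hx => hf₀zero x (fun hxΩ => hx.2 (subset_closure hxΩ)))]
            simp
          rw [this, add_zero]
  rw [hsplitE]
  -- trivial case : E' has measure zero
  rcases eq_or_ne (volume E') 0 with hv0 | hv0
  · have : ∫ x in E', f₀ x = 0 := by
      rw [Measure.restrict_eq_zero.mpr hv0]
      simp
    rw [this]
    positivity
  -- main case
  set v : ℝ := (volume E').toReal with hvdef
  have hv : 0 < v := ENNReal.toReal_pos hv0 hE'fin.ne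
  -- Hölder
  have hHolder : ∫ x in E', f₀ x
      ≤ (eLpNorm f₀ (ENNReal.ofReal m) volume).toReal * v ^ (1 - 1/m) := by
    haveI : IsFiniteMeasure (volume.restrict E') :=
      ⟨by rw [Measure.restrict_apply_univ]; exact hE'fin⟩
    have hfae : AEStronglyMeasurable f₀ (volume.restrict E') :=
      (hf₀mem.restrict E').aestronglyMeasurable
    have h1 : ∫ x in E', f₀ x ≤ (eLpNorm f₀ 1 (volume.restrict E')).toReal := by
      calc ∫ x in E', f₀ x ≤ |∫ x in E', f₀ x| := le_abs_self _
        _ ≤ ∫ x in E', ‖f₀ x‖ := by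
            rw [← Real.norm_eq_abs]
            exact norm_integral_le_integral_norm _
        _ = (∫⁻ x in E', ‖f₀ x‖ₑ ∂volume).toReal := integral_norm_eq_lintegral_enorm hfae
        _ = (eLpNorm f₀ 1 (volume.restrict E')).toReal := by
            rw [eLpNorm_one_eq_lintegral_enorm]
    have h2 : eLpNorm f₀ 1 (volume.restrict E')
        ≤ eLpNorm f₀ (ENNReal.ofReal m) (volume.restrict E')
          * (volume E') ^ (1 - 1/m) := by
      have := eLpNorm_le_eLpNorm_mul_rpow_measure_univ (μ := volume.restrict E')
        (p := 1) (q := ENNReal.ofReal m) (ENNReal.one_le_ofReal.mpr hm1.le) hfae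
      rw [Measure.restrict_apply_univ] at this
      simpa [ENNReal.toReal_ofReal hm0.le] using this
    have h3 : eLpNorm f₀ (ENNReal.ofReal m) (volume.restrict E')
        ≤ eLpNorm f₀ (ENNReal.ofReal m) volume :=
      eLpNorm_mono_measure f₀ Measure.restrict_le_self
    have hfin1 : eLpNorm f₀ (ENNReal.ofReal m) volume ≠ ∞ := hf₀mem.2.ne
    have hfin2 : (volume E') ^ (1 - 1/m) ≠ ∞ :=
      (ENNReal.rpow_lt_top_of_nonneg (by linarith [hθm, hθ1]) hE'fin.ne).ne
    calc ∫ x in E', f₀ x ≤ (eLpNorm f₀ 1 (volume.restrict E')).toReal := h1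
      _ ≤ ((eLpNorm f₀ (ENNReal.ofReal m) volume) * (volume E') ^ (1 - 1/m)).toReal := by
          apply ENNReal.toReal_mono (ENNReal.mul_ne_top hfin1 hfin2)
          exact h2.trans (mul_le_mul_left h3 _)
      _ = (eLpNorm f₀ (ENNReal.ofReal m) volume).toReal * v ^ (1 - 1/m) := by
          rw [ENNReal.toReal_mul, ENNReal.toReal_rpow]
  -- interpolation of the volume exponents
  have hvol : v ^ (1 - 1/m) ≤ C₁ * v ^ (1 - θ) := by
    have hvmax : v ≤ max 1 vΩ := by
      apply le_max_of_le_right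
      exact ENNReal.toReal_mono hΩcfin.ne (measure_mono Set.inter_subset_right)
    have hsplit : v ^ (1 - 1/m) = v ^ (θ - 1/m) * v ^ (1 - θ) := by
      rw [← Real.rpow_add hv]
      congr 1
      ring
    rw [hsplit]
    apply mul_le_mul_of_nonneg_right _ (Real.rpow_nonneg hv.le _)
    calc v ^ (θ - 1/m) ≤ (max 1 vΩ) ^ (θ - 1/m) :=
          Real.rpow_le_rpow hv.le hvmax (by linarith)
      _ = C₁ := rfl
  -- capacity estimate
  have hcapv : v ^ (1 - θ) ≤ C₂ * D := by
    have hsub : E' ⊆ {x : EuclideanSpace ℝ (Fin N) | 1 ≤ φ x} :=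
      fun x hx => hφE x hx.1
    have hsub2 : {x : EuclideanSpace ℝ (Fin N) | 1 ≤ φ x} ⊆ tsupport φ := by
      intro x hx
      apply subset_tsupport
      simp only [Function.mem_support]
      intro hc
      simp only [Set.mem_setOf_eq, hc] at hx
      linarith
    have hfin : volume {x : EuclideanSpace ℝ (Fin N) | 1 ≤ φ x} ≠ ∞ :=
      (lt_of_le_of_lt (measure_mono hsub2) hφsupp.measure_lt_top).ne
    have hvle : v ≤ (volume {x : EuclideanSpace ℝ (Fin N) | 1 ≤ φ x}).toReal :=
      ENNReal.toReal_mono hfin (measure_mono hsub)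
    exact hcap φ hφ hφsupp v hv hvle
  -- put everything together
  calc ∫ x in E', f₀ x
      ≤ (eLpNorm f₀ (ENNReal.ofReal m) volume).toReal * v ^ (1 - 1/m) := hHolder
    _ ≤ (eLpNorm f₀ (ENNReal.ofReal m) volume).toReal * (C₁ * v ^ (1 - θ)) :=
        mul_le_mul_of_nonneg_left hvol hfnorm_nn
    _ ≤ (eLpNorm f₀ (ENNReal.ofReal m) volume).toReal * (C₁ * (C₂ * D)) := by
        apply mul_le_mul_of_nonneg_left _ hfnorm_nn
        exact mul_le_mul_of_nonneg_left hcapv hC₁.le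
    _ = C₁ * C₂ * (eLpNorm f₀ (ENNReal.ofReal m) volume).toReal * D := by ring
end
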